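/- arXiv:2201.01793 — 3 statements merged into one kernel-verified Lean document; each statement's English description precedes it below -/
import Mathlib

section
/- For every positive integer p, the integral from 0 to 1 of sqrt(1 + log(ε^{-p})) dε is at most 1 + sqrt(2πp) · e^{1/p}. -/
open Real

lemma log_intervalIntegrable01 : IntervalIntegrable Real.log MeasureTheory.volume 0 1 := by
  rw [intervalIntegrable_iff_integrableOn_Ioc_of_le zero_le_one]
  have hg : MeasureTheory.IntegrableOn (fun x : ℝ => 2 * x ^ (-(1:ℝ)/2)) (Set.Ioc 0 1) := by
    have := (intervalIntegral.intervalIntegrable_rpow' (a := 0) (b := 1) (r := -(1:ℝ)/2) (by norm_num)).const_mul 2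
    rwa [intervalIntegrable_iff_integrableOn_Ioc_of_le zero_le_one] at this
  refine hg.integrable.mono ?_ ?_
  · exact Real.measurable_log.aestronglyMeasurable
  · filter_upwards [MeasureTheory.ae_restrict_mem measurableSet_Ioc] with x hx
    have hx0 : 0 < x := hx.1
    have hx1 : x ≤ 1 := hx.2
    have hlog : Real.log x ≤ 0 := Real.log_nonpos hx0.le hx1
    have key : -Real.log x ≤ 2 * x ^ (-(1:ℝ)/2) := by
      have h1 : Real.log (x ^ (-(1:ℝ)/2)) = (-(1:ℝ)/2) * Real.log x :=
        Real.log_rpow hx0 _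
      have h2 : Real.log (x ^ (-(1:ℝ)/2)) ≤ x ^ (-(1:ℝ)/2) - 1 :=
        Real.log_le_sub_one_of_pos (Real.rpow_pos_of_pos hx0 _)
      have h3 : (0:ℝ) ≤ x ^ (-(1:ℝ)/2) := (Real.rpow_pos_of_pos hx0 _).le
      nlinarith
    have hgpos : (0:ℝ) ≤ 2 * x ^ (-(1:ℝ)/2) := by positivity
    rw [Real.norm_eq_abs, Real.norm_eq_abs, abs_of_nonneg hgpos, abs_of_nonpos hlog]
    exact key

lemma integral_log01 : ∫ x in (0:ℝ)..1, Real.log x = -1 := by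
  have h := intervalIntegral.integral_eq_sub_of_hasDeriv_right_of_le
    (f := fun x => x * Real.log x - x) (f' := Real.log) zero_le_one
    ((Real.continuous_mul_log.sub continuous_id).continuousOn)
    (fun x hx => by
      have hx0 : x ≠ 0 := ne_of_gt hx.1
      have : HasDerivAt (fun x : ℝ => x * Real.log x - x) (Real.log x) x := by
        have h1 : HasDerivAt (fun x : ℝ => x * Real.log x) (Real.log x + 1) x := by
          have := (hasDerivAt_id x).mul (Real.hasDerivAt_log hx0)
          rw [show 1 * log x + id x * x⁻¹ = log x + 1 by simp [hx0]] at this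
          exact this
        have h2 := h1.sub (hasDerivAt_id x)
        rw [add_sub_cancel_right] at h2
        exact h2
      exact this.hasDerivWithinAt)
    log_intervalIntegrable01
  simp at h
  simp

theorem bracketing_integral (p : ℕ) (hp : 0 < p) :
    ∫ ε in (0:ℝ)..1, Real.sqrt (1 + Real.log (ε ^ (-(p:ℝ))))
      ≤ 1 + Real.sqrt (2 * Real.pi * p) * Real.exp (1 / p) := by
  set s : ℝ := Real.sqrt (p + 1) with hs
  have hppos : (0:ℝ) < p := by exact_mod_cast hp
  have hspos : 0 < s := Real.sqrt_pos.mpr (by linarith)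
  have hssq : s ^ 2 = p + 1 := Real.sq_sqrt (by linarith)
  set g : ℝ → ℝ := fun ε => ((p + 2 : ℝ) - p * Real.log ε) / (2 * s) with hg
  have hgint : IntervalIntegrable g MeasureTheory.volume 0 1 := by
    apply IntervalIntegrable.div_const
    exact (intervalIntegrable_const).sub (log_intervalIntegrable01.const_mul _)
  -- pointwise bound on Icc 0 1
  have hpt : ∀ x ∈ Set.Icc (0:ℝ) 1,
      Real.sqrt (1 + Real.log (x ^ (-(p:ℝ)))) ≤ g x := by
    intro x hx
    rcases eq_or_lt_of_le hx.1 with h0 | h0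
    · -- x = 0
      subst h0
      rw [Real.zero_rpow (neg_ne_zero.mpr (by exact_mod_cast hp.ne' : (p:ℝ) ≠ 0))]
      simp only [Real.log_zero, add_zero, Real.sqrt_one, hg, mul_zero, sub_zero]
      rw [le_div_iff₀ (by positivity)]
      nlinarith [hssq, hspos.le, Real.sq_sqrt (show (0:ℝ) ≤ p + 1 by linarith)]
    · have hlog : Real.log (x ^ (-(p:ℝ))) = -(p:ℝ) * Real.log x := Real.log_rpow h0 _
      rw [hlog]
      set y : ℝ := 1 + -(p:ℝ) * Real.log x with hy
      have hlx : Real.log x ≤ 0 := Real.log_nonpos h0.le hx.2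
      have hy1 : 1 ≤ y := by nlinarith
      have hsy : Real.sqrt y ^ 2 = y := Real.sq_sqrt (by linarith)
      have hsynn : 0 ≤ Real.sqrt y := Real.sqrt_nonneg y
      have key : Real.sqrt y ≤ (y + (p+1)) / (2 * s) := by
        rw [le_div_iff₀ (by positivity)]
        nlinarith [sq_nonneg (Real.sqrt y - s)]
      calc Real.sqrt y ≤ (y + (p+1)) / (2 * s) := key
        _ = g x := by simp only [hg, hy]; ring_nf
  -- integrability of f
  have hfmeas : MeasureTheory.AEStronglyMeasurable
      (fun x : ℝ => Real.sqrt (1 + Real.log (x ^ (-(p:ℝ)))))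
      (MeasureTheory.volume.restrict (Set.Ioc (0:ℝ) 1)) := by
    have hm : Measurable fun x : ℝ => Real.sqrt (1 + -(p:ℝ) * Real.log x) :=
      (Real.continuous_sqrt.measurable).comp
        (measurable_const.add (Real.measurable_log.const_mul _))
    refine hm.aestronglyMeasurable.congr ?_
    filter_upwards [MeasureTheory.ae_restrict_mem measurableSet_Ioc] with x hx
    rw [Real.log_rpow hx.1]
  have hfint : IntervalIntegrable (fun x : ℝ => Real.sqrt (1 + Real.log (x ^ (-(p:ℝ)))))
      MeasureTheory.volume 0 1 := by
    rw [intervalIntegrable_iff_integrableOn_Ioc_of_le zero_le_one]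
    have hgI : MeasureTheory.IntegrableOn g (Set.Ioc (0:ℝ) 1) := by
      rw [← intervalIntegrable_iff_integrableOn_Ioc_of_le zero_le_one]; exact hgint
    refine hgI.integrable.mono hfmeas ?_
    filter_upwards [MeasureTheory.ae_restrict_mem measurableSet_Ioc] with x hx
    have hxI : x ∈ Set.Icc (0:ℝ) 1 := ⟨hx.1.le, hx.2⟩
    have h1 := hpt x hxI
    have h0 : 0 ≤ Real.sqrt (1 + Real.log (x ^ (-(p:ℝ)))) := Real.sqrt_nonneg _
    rw [Real.norm_eq_abs, Real.norm_eq_abs, abs_of_nonneg h0, abs_of_nonneg (le_trans h0 h1)]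
    exact h1
  have hmono : ∫ ε in (0:ℝ)..1, Real.sqrt (1 + Real.log (ε ^ (-(p:ℝ)))) ≤ ∫ ε in (0:ℝ)..1, g ε :=
    intervalIntegral.integral_mono_on zero_le_one hfint hgint hpt
  have hgval : ∫ ε in (0:ℝ)..1, g ε = s := by
    have h1 : ∫ ε in (0:ℝ)..1, ((p + 2 : ℝ) - p * Real.log ε)
        = (p + 2 : ℝ) - p * (-1) := by
      rw [intervalIntegral.integral_sub intervalIntegrable_const
        (log_intervalIntegrable01.const_mul _),
        intervalIntegral.integral_const_mul, integral_log01]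
      simp
    have : ∫ ε in (0:ℝ)..1, g ε = (∫ ε in (0:ℝ)..1, ((p + 2 : ℝ) - p * Real.log ε)) / (2 * s) := by
      simp only [hg]
      rw [intervalIntegral.integral_div]
    rw [this, h1]
    rw [div_eq_iff (by positivity)]
    nlinarith [hssq]
  have hfinal : s ≤ 1 + Real.sqrt (2 * Real.pi * p) * Real.exp (1 / p) := by
    have h1 : s ≤ Real.sqrt p + 1 := by
      rw [show Real.sqrt (p:ℝ) + 1 = Real.sqrt ((Real.sqrt (p:ℝ) + 1)^2) from
        (Real.sqrt_sq (by positivity)).symm]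
      apply Real.sqrt_le_sqrt
      nlinarith [Real.sq_sqrt hppos.le, Real.sqrt_nonneg (p:ℝ)]
    have h2 : Real.sqrt (p:ℝ) ≤ Real.sqrt (2 * Real.pi * p) := by
      apply Real.sqrt_le_sqrt
      nlinarith [Real.pi_gt_three]
    have h3 : Real.sqrt (2 * Real.pi * p) ≤ Real.sqrt (2 * Real.pi * p) * Real.exp (1 / p) :=
      le_mul_of_one_le_right (Real.sqrt_nonneg _) (Real.one_le_exp (by positivity))
    linarith
  calc ∫ ε in (0:ℝ)..1, Real.sqrt (1 + Real.log (ε ^ (-(p:ℝ)))) ≤ ∫ ε in (0:ℝ)..1, g ε := hmono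
    _ = s := hgval
    _ ≤ _ := hfinal
end

section
/- Let U, Û ∈ ℝ^{n×G} with all rows of U nonzero, and let Û' and U' be the matrices obtained by normalizing each row of Û and U to have Euclidean norm 1 (assume rows of Û are nonzero). Then for any orthogonal matrix O ∈ ℝ^{G×G}, the squared Frobenius norm ‖Û' - U'O‖_F² is at most (4 / min_i ‖U_{i,·}‖₂²) · ‖Û - UO‖_F². -/
open Matrix

lemma aux_norm {E : Type*} [NormedAddCommGroup E] [NormedSpace ℝ E]
    (a b : E) (ha : a ≠ 0) (hb : b ≠ 0) :
    ‖‖a‖⁻¹ • a - ‖b‖⁻¹ • b‖ ≤ 2 * ‖a - b‖ / ‖b‖ := by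
  have hb' : (0:ℝ) < ‖b‖ := norm_pos_iff.mpr hb
  have ha' : (0:ℝ) < ‖a‖ := norm_pos_iff.mpr ha
  have hsplit : ‖a‖⁻¹ • a - ‖b‖⁻¹ • b
      = (‖a‖⁻¹ - ‖b‖⁻¹) • a + ‖b‖⁻¹ • (a - b) := by module
  rw [hsplit]
  have h1 : ‖(‖a‖⁻¹ - ‖b‖⁻¹) • a‖ = |‖a‖⁻¹ - ‖b‖⁻¹| * ‖a‖ := by
    rw [norm_smul, Real.norm_eq_abs]
  have h2 : |‖a‖⁻¹ - ‖b‖⁻¹| * ‖a‖ = |‖b‖ - ‖a‖| / ‖b‖ := by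
    have he : ‖a‖⁻¹ - ‖b‖⁻¹ = (‖b‖ - ‖a‖) / (‖a‖ * ‖b‖) := by field_simp
    rw [he, abs_div, abs_of_pos (mul_pos ha' hb')]
    field_simp
  have h3 : |‖b‖ - ‖a‖| ≤ ‖a - b‖ := by
    have := abs_norm_sub_norm_le b a
    rwa [show ‖b - a‖ = ‖a - b‖ from norm_sub_rev b a] at this
  calc ‖(‖a‖⁻¹ - ‖b‖⁻¹) • a + ‖b‖⁻¹ • (a - b)‖
      ≤ ‖(‖a‖⁻¹ - ‖b‖⁻¹) • a‖ + ‖‖b‖⁻¹ • (a - b)‖ := norm_add_le _ _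
    _ = |‖b‖ - ‖a‖| / ‖b‖ + ‖b‖⁻¹ * ‖a - b‖ := by
        rw [h1, h2, norm_smul, Real.norm_eq_abs, abs_of_pos (inv_pos.mpr hb')]
    _ ≤ ‖a - b‖ / ‖b‖ + ‖b‖⁻¹ * ‖a - b‖ := by
        gcongr
    _ = 2 * ‖a - b‖ / ‖b‖ := by field_simp; ring

lemma aux_norm_sq {E : Type*} [NormedAddCommGroup E] [NormedSpace ℝ E]
    (a b : E) (ha : a ≠ 0) (hb : b ≠ 0) :
    ‖‖a‖⁻¹ • a - ‖b‖⁻¹ • b‖ ^ 2 ≤ 4 / ‖b‖ ^ 2 * ‖a - b‖ ^ 2 := by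
  have hb' : (0:ℝ) < ‖b‖ := norm_pos_iff.mpr hb
  have h := aux_norm a b ha hb
  have h2 : ‖‖a‖⁻¹ • a - ‖b‖⁻¹ • b‖ ^ 2 ≤ (2 * ‖a - b‖ / ‖b‖) ^ 2 :=
    pow_le_pow_left₀ (norm_nonneg _) h 2
  calc ‖‖a‖⁻¹ • a - ‖b‖⁻¹ • b‖ ^ 2 ≤ (2 * ‖a - b‖ / ‖b‖) ^ 2 := h2
    _ = 4 / ‖b‖ ^ 2 * ‖a - b‖ ^ 2 := by field_simp; ring

lemma euclid_norm_sq {G : ℕ} (x : EuclideanSpace ℝ (Fin G)) :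
    ‖x‖ ^ 2 = ∑ i, (x i) ^ 2 := by
  rw [EuclideanSpace.norm_eq, Real.sq_sqrt (by positivity)]
  simp [sq_abs]

lemma aux_rows {G : ℕ} (a b : Fin G → ℝ)
    (ha : (0:ℝ) < ∑ k, (a k) ^ 2) (hb : (0:ℝ) < ∑ k, (b k) ^ 2) :
    ∑ j, (a j / Real.sqrt (∑ k, (a k) ^ 2) - b j / Real.sqrt (∑ k, (b k) ^ 2)) ^ 2
      ≤ 4 / (∑ k, (b k) ^ 2) * ∑ j, (a j - b j) ^ 2 := by
  set A : EuclideanSpace ℝ (Fin G) := (WithLp.equiv 2 (Fin G → ℝ)).symm a with hA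
  set B : EuclideanSpace ℝ (Fin G) := (WithLp.equiv 2 (Fin G → ℝ)).symm b with hB
  have hAapp : ∀ i, A i = a i := fun i => rfl
  have hBapp : ∀ i, B i = b i := fun i => rfl
  have hnA : ‖A‖ ^ 2 = ∑ k, (a k) ^ 2 := by rw [euclid_norm_sq]; simp [hAapp]
  have hnB : ‖B‖ ^ 2 = ∑ k, (b k) ^ 2 := by rw [euclid_norm_sq]; simp [hBapp]
  have hA0 : A ≠ 0 := by
    intro h; rw [h, norm_zero] at hnA; simp at hnA; linarith
  have hB0 : B ≠ 0 := by
    intro h; rw [h, norm_zero] at hnB; simp at hnB; linarith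
  have hnA' : ‖A‖ = Real.sqrt (∑ k, (a k) ^ 2) := by
    rw [← hnA, Real.sqrt_sq (norm_nonneg _)]
  have hnB' : ‖B‖ = Real.sqrt (∑ k, (b k) ^ 2) := by
    rw [← hnB, Real.sqrt_sq (norm_nonneg _)]
  have key := aux_norm_sq A B hA0 hB0
  rw [euclid_norm_sq, euclid_norm_sq, euclid_norm_sq] at key
  have hL : ∀ j, ((‖A‖⁻¹ • A - ‖B‖⁻¹ • B) j)
      = a j / Real.sqrt (∑ k, (a k) ^ 2) - b j / Real.sqrt (∑ k, (b k) ^ 2) := by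
    intro j
    simp [PiLp.sub_apply, PiLp.smul_apply, hAapp, hBapp, hnA', hnB', div_eq_inv_mul, mul_comm]
  have hR : ∀ j, ((A - B) j) = a j - b j := by
    intro j; simp [PiLp.sub_apply, hAapp, hBapp]
  simp only [hL, hR, hAapp, hBapp] at key
  exact key

theorem row_normalized_frobenius_bound
    (n G : ℕ) (hn : 0 < n)
    (U Uhat : Matrix (Fin n) (Fin G) ℝ)
    (hU : ∀ i, (fun j => U i j) ≠ 0)
    (hUhat : ∀ i, (fun j => Uhat i j) ≠ 0)
    (U' Uhat' : Matrix (Fin n) (Fin G) ℝ)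
    (hU' : ∀ i j, U' i j = U i j / Real.sqrt (∑ k, (U i k) ^ 2))
    (hUhat' : ∀ i j, Uhat' i j = Uhat i j / Real.sqrt (∑ k, (Uhat i k) ^ 2))
    (O : Matrix (Fin G) (Fin G) ℝ) (hO : Oᵀ * O = 1) :
    ∑ i, ∑ j, (Uhat' i j - (U' * O) i j) ^ 2 ≤
      (4 / Finset.univ.inf' (Finset.univ_nonempty_iff.mpr ⟨⟨0, hn⟩⟩)
          (fun i => ∑ k, (U i k) ^ 2)) *
        ∑ i, ∑ j, (Uhat i j - (U * O) i j) ^ 2 := by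
  have hOO : O * Oᵀ = 1 := mul_eq_one_comm.mp hO
  -- positivity of row sums
  have hposgen : ∀ (v : Fin G → ℝ), v ≠ 0 → (0:ℝ) < ∑ k, (v k) ^ 2 := by
    intro v hv
    rcases Function.ne_iff.mp hv with ⟨k, hk⟩
    have hk2 : (0:ℝ) < (v k) ^ 2 := pow_two_pos_of_ne_zero hk
    exact lt_of_lt_of_le hk2 (Finset.single_le_sum (f := fun k => (v k) ^ 2)
      (fun i _ => sq_nonneg _) (Finset.mem_univ k))
  have hUpos : ∀ i, (0:ℝ) < ∑ k, (U i k) ^ 2 := fun i => hposgen _ (hU i)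
  have hUhatpos : ∀ i, (0:ℝ) < ∑ k, (Uhat i k) ^ 2 := fun i => hposgen _ (hUhat i)
  -- orthogonal invariance of row sums of squares
  have hrowUO : ∀ i, ∑ j, ((U * O) i j) ^ 2 = ∑ k, (U i k) ^ 2 := by
    intro i
    have key : (U * O) * (U * O)ᵀ = U * Uᵀ := by
      rw [Matrix.transpose_mul, Matrix.mul_assoc, ← Matrix.mul_assoc O, hOO,
        Matrix.one_mul]
    have := congrFun (congrFun key i) i
    simpa [Matrix.mul_apply, sq, mul_comm] using this
  -- per-row bound
  have hrow : ∀ i, ∑ j, (Uhat' i j - (U' * O) i j) ^ 2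
      ≤ 4 / (∑ k, (U i k) ^ 2) * ∑ j, (Uhat i j - (U * O) i j) ^ 2 := by
    intro i
    have hUO' : ∀ j, (U' * O) i j = (U * O) i j / Real.sqrt (∑ k, (U i k) ^ 2) := by
      intro j
      simp only [Matrix.mul_apply, hU']
      rw [Finset.sum_div]
      congr 1; ext k; ring
    have hbpos : (0:ℝ) < ∑ k, ((U * O) i k) ^ 2 := by rw [hrowUO i]; exact hUpos i
    have := aux_rows (fun j => Uhat i j) (fun j => (U * O) i j) (hUhatpos i) hbpos
    simp only [hrowUO i] at this
    calc ∑ j, (Uhat' i j - (U' * O) i j) ^ 2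
        = ∑ j, (Uhat i j / Real.sqrt (∑ k, (Uhat i k) ^ 2)
            - (U * O) i j / Real.sqrt (∑ k, (U i k) ^ 2)) ^ 2 := by
          apply Finset.sum_congr rfl; intro j _; rw [hUhat', hUO']
      _ ≤ 4 / (∑ k, (U i k) ^ 2) * ∑ j, (Uhat i j - (U * O) i j) ^ 2 := this
  -- combine
  set m := Finset.univ.inf' (Finset.univ_nonempty_iff.mpr ⟨⟨0, hn⟩⟩)
      (fun i => ∑ k, (U i k) ^ 2) with hm
  have hmpos : 0 < m := by
    rw [hm]
    apply (Finset.lt_inf'_iff _).mpr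
    intro i _
    exact hUpos i
  have hmle : ∀ i, m ≤ ∑ k, (U i k) ^ 2 := fun i =>
    Finset.inf'_le _ (Finset.mem_univ i)
  rw [Finset.mul_sum]
  apply Finset.sum_le_sum
  intro i _
  calc ∑ j, (Uhat' i j - (U' * O) i j) ^ 2
      ≤ 4 / (∑ k, (U i k) ^ 2) * ∑ j, (Uhat i j - (U * O) i j) ^ 2 := hrow i
    _ ≤ 4 / m * ∑ j, (Uhat i j - (U * O) i j) ^ 2 := by
        apply mul_le_mul_of_nonneg_right
        · apply div_le_div_of_nonneg_left (by norm_num) hmpos (hmle i)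
        · positivity
end

section
/- Let I_1,...,I_G partition {1,...,n} and let U ∈ ℝ^{n×G} have rows U_{i,·} = e_k (the k-th standard basis vector) whenever i ∈ I_k. Let O be a G×G orthogonal matrix and let Û ∈ ℝ^{n×G} satisfy ‖Û - UO‖_F < 1/2. Then for any i, j in different groups, ‖Û_{i,·} - Û_{j,·}‖₂ > 1/√2, while for any i, j in the same group, ‖Û_{i,·} - Û_{j,·}‖₂ < 1/√2. -/
open Matrix

theorem group_separation_after_perturbation
    (n G : ℕ) (g : Fin n → Fin G)
    (U : Matrix (Fin n) (Fin G) ℝ)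
    (hU : ∀ i k, U i k = if g i = k then (1:ℝ) else 0)
    (O : Matrix (Fin G) (Fin G) ℝ) (hO : Oᵀ * O = 1)
    (Uhat : Matrix (Fin n) (Fin G) ℝ)
    (hclose : Real.sqrt (∑ i, ∑ k, (Uhat i k - (U * O) i k) ^ 2) < 1 / 2) :
    ∀ i j : Fin n,
      (g i ≠ g j →
        1 / Real.sqrt 2 < Real.sqrt (∑ k, (Uhat i k - Uhat j k) ^ 2)) ∧
      (g i = g j →
        Real.sqrt (∑ k, (Uhat i k - Uhat j k) ^ 2) < 1 / Real.sqrt 2) := by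
  have hOO : O * Oᵀ = 1 := mul_eq_one_comm.mp hO
  have hrow : ∀ a b : Fin G, ∑ k, O a k * O b k = if a = b then (1:ℝ) else 0 := by
    intro a b
    have := congrFun (congrFun hOO a) b
    simpa [Matrix.mul_apply, Matrix.one_apply, Matrix.transpose_apply] using this
  have hUO : ∀ i k, (U * O) i k = O (g i) k := by
    intro i k
    simp [Matrix.mul_apply, hU, ite_mul]
  set x : Fin n → EuclideanSpace ℝ (Fin G) := fun i => WithLp.toLp 2 (fun k => Uhat i k) with hx
  set y : Fin n → EuclideanSpace ℝ (Fin G) := fun i => WithLp.toLp 2 (fun k => (U * O) i k) with hy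
  have normsub : ∀ u v : EuclideanSpace ℝ (Fin G),
      ‖u - v‖ = Real.sqrt (∑ k, (u k - v k) ^ 2) := by
    intro u v
    rw [EuclideanSpace.norm_eq]
    congr 1
    refine Finset.sum_congr rfl fun k _ => ?_
    simp [Real.norm_eq_abs, sq_abs]
  have s2pos : (0:ℝ) < Real.sqrt 2 := Real.sqrt_pos.mpr (by norm_num)
  have s2sq : Real.sqrt 2 ^ 2 = 2 := Real.sq_sqrt (by norm_num)
  -- total sum bound
  have hSnn : (0:ℝ) ≤ ∑ i, ∑ k, (Uhat i k - (U * O) i k) ^ 2 :=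
    Finset.sum_nonneg fun i _ => Finset.sum_nonneg fun k _ => sq_nonneg _
  have hS : ∑ i, ∑ k, (Uhat i k - (U * O) i k) ^ 2 < 1 / 4 := by
    have := Real.sq_sqrt hSnn
    nlinarith [Real.sqrt_nonneg (∑ i, ∑ k, (Uhat i k - (U * O) i k) ^ 2)]
  have hnormsq : ∀ i : Fin n, ‖x i - y i‖ ^ 2 = ∑ k, (Uhat i k - (U * O) i k) ^ 2 := by
    intro i
    rw [normsub, Real.sq_sqrt (Finset.sum_nonneg fun k _ => sq_nonneg _)]
  intro i j
  by_cases hij : i = j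
  · subst hij
    constructor
    · intro h; exact absurd rfl h
    · intro _
      have : Real.sqrt (∑ k, (Uhat i k - Uhat i k) ^ 2) = 0 := by simp
      rw [this]
      positivity
  · -- i ≠ j
    have hpair : ‖x i - y i‖ ^ 2 + ‖x j - y j‖ ^ 2 < 1 / 4 := by
      rw [hnormsq i, hnormsq j]
      calc (∑ k, (Uhat i k - (U * O) i k) ^ 2) + ∑ k, (Uhat j k - (U * O) j k) ^ 2
          = ∑ i' ∈ ({i, j} : Finset (Fin n)), ∑ k, (Uhat i' k - (U * O) i' k) ^ 2 := by
            rw [Finset.sum_pair hij]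
        _ ≤ ∑ i', ∑ k, (Uhat i' k - (U * O) i' k) ^ 2 := by
            apply Finset.sum_le_sum_of_subset_of_nonneg (Finset.subset_univ _)
            exact fun i' _ _ => Finset.sum_nonneg fun k _ => sq_nonneg _
        _ < 1 / 4 := hS
    have hab : ‖x i - y i‖ + ‖x j - y j‖ < 1 / Real.sqrt 2 := by
      have ha := norm_nonneg (x i - y i)
      have hb := norm_nonneg (x j - y j)
      rw [lt_div_iff₀ s2pos]
      nlinarith [sq_nonneg (‖x i - y i‖ - ‖x j - y j‖),
        sq_nonneg ((‖x i - y i‖ + ‖x j - y j‖) * Real.sqrt 2)]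
    have hgoal : Real.sqrt (∑ k, (Uhat i k - Uhat j k) ^ 2) = ‖x i - x j‖ := by
      rw [normsub]
    rw [hgoal]
    constructor
    · intro hne
      have hyij : ‖y i - y j‖ = Real.sqrt 2 := by
        rw [normsub]
        have : ∑ k, (y i k - y j k) ^ 2 = 2 := by
          have expand : ∀ k : Fin G, (y i k - y j k) ^ 2 =
              O (g i) k * O (g i) k + O (g j) k * O (g j) k
                - 2 * (O (g i) k * O (g j) k) := by
            intro k
            simp only [hy, hUO, PiLp.toLp_apply]
            ring
          rw [Finset.sum_congr rfl fun k _ => expand k]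
          rw [Finset.sum_sub_distrib, Finset.sum_add_distrib, ← Finset.mul_sum,
            hrow (g i) (g i), hrow (g j) (g j), hrow (g i) (g j), if_pos rfl, if_pos rfl,
            if_neg hne]
          ring
        rw [this]
      have htri : ‖y i - y j‖ ≤ ‖y i - x i‖ + ‖x i - x j‖ + ‖x j - y j‖ := by
        have := dist_triangle4 (y i) (x i) (x j) (y j)
        simpa [dist_eq_norm] using this
      rw [norm_sub_rev (y i) (x i)] at htri
      have h2 : Real.sqrt 2 - 1 / Real.sqrt 2 = 1 / Real.sqrt 2 := by
        field_simp
        nlinarith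
      nlinarith [htri, hab, hyij]
    · intro heq
      have hyij : y i = y j := by
        ext k
        simp only [hy, hUO, heq, PiLp.toLp_apply]
      rw [hyij] at hab
      have htri : ‖x i - x j‖ ≤ ‖x i - y j‖ + ‖y j - x j‖ := by
        have := dist_triangle (x i) (y j) (x j)
        simpa [dist_eq_norm] using this
      rw [norm_sub_rev (y j) (x j)] at htri
      linarith
end
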